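/- arXiv:1607.08260 — 5 statements merged into one kernel-verified Lean document; each statement's English description precedes it below -/
import Mathlib

section
/- Let G be the real symmetric 5×5 matrix with rows (−2, 3, 2, 2, 2), (3, −2, 1, 1, 1), (2, 1, −2, 0, 0), (2, 1, 0, −2, 0), (2, 1, 0, 0, −2). Then G is symmetric and, counted with multiplicity, exactly one eigenvalue of G is positive and four eigenvalues of G are negative; that is, the associated real quadratic form has signature (1,4). -/
/-!
The characteristic polynomial of the Gram matrix is `(x + 2)² (x³ + 6x² - 12x - 76)`, so every
eigenvalue exceeds `-59/10` and every positive one exceeds `7/2`. The determinant `304 > 0` is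
the product of the eigenvalues, so none vanishes and an even number of them is negative. The
trace `-10` is their sum, and three positive eigenvalues would push it above
`3 · 7/2 - 2 · 59/10 > -10`. Hence there are four negative eigenvalues and one positive one.
-/

open Matrix

/-- The Gram matrix of the lattice `𝕃` in the basis `(Γ, Q, L₁, L₂, L₃)`. -/
noncomputable def gramMatrixR : Matrix (Fin 5) (Fin 5) ℝ :=
  !![-2, 3, 2, 2, 2;
      3, -2, 1, 1, 1;
      2, 1, -2, 0, 0;
      2, 1, 0, -2, 0;
      2, 1, 0, 0, -2]

open Finset

section Counting

variable {ι R : Type*} [Fintype ι] [CommRing R] [LinearOrder R] {f : ι → R}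

theorem even_card_filter_neg_of_prod_pos [IsStrictOrderedRing R] (h : 0 < ∏ i, f i) :
    Even #{i | f i < 0} := by
  have h_nonneg : 0 ≤ ∏ i ∈ univ.filter (fun i => ¬ f i < 0), f i :=
    prod_nonneg fun i hi => not_lt.mp (mem_filter.mp hi).2
  have h_neg : 0 < ∏ i ∈ univ.filter (fun i => f i < 0), -f i :=
    prod_pos fun i hi => neg_pos.mpr (mem_filter.mp hi).2
  rw [← prod_filter_mul_prod_filter_not univ (fun i => f i < 0)] at h
  by_contra h_odd
  rw [Nat.not_even_iff_odd] at h_odd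
  rw [prod_neg, h_odd.neg_one_pow, neg_one_mul, neg_pos] at h_neg
  nlinarith [mul_nonpos_of_nonpos_of_nonneg h_neg.le h_nonneg]

theorem filter_not_pos_eq_filter_neg (hf : ∀ i, f i ≠ 0) :
    (univ.filter fun i => ¬ 0 < f i) = univ.filter fun i => f i < 0 :=
  filter_congr fun i _ => ⟨fun h => (not_lt.mp h).lt_of_ne (hf i), fun h => h.not_gt⟩

theorem card_filter_pos_add_card_filter_neg (hf : ∀ i, f i ≠ 0) :
    #{i | 0 < f i} + #{i | f i < 0} = Fintype.card ι := by
  rw [← filter_not_pos_eq_filter_neg hf, card_filter_add_card_filter_not, card_univ]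

theorem mul_card_filter_pos_add_mul_card_filter_neg_le_sum [IsStrictOrderedRing R]
    (hf : ∀ i, f i ≠ 0) {a b : R} (ha : ∀ i, a ≤ f i) (hb : ∀ i, 0 < f i → b ≤ f i) :
    b * #{i | 0 < f i} + a * #{i | f i < 0} ≤ ∑ i, f i := by
  rw [← filter_not_pos_eq_filter_neg hf,
    ← sum_filter_add_sum_filter_not univ (fun i => 0 < f i)]
  gcongr
  · simpa [nsmul_eq_mul, mul_comm] using
      card_nsmul_le_sum _ f b fun i hi => hb i (mem_filter.mp hi).2
  · simpa [nsmul_eq_mul, mul_comm] using card_nsmul_le_sum _ f a fun i _ => ha i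

end Counting

theorem Matrix.IsHermitian.det_scalar_eigenvalues_sub_eq_zero {n : Type*} [Fintype n]
    [DecidableEq n] {A : Matrix n n ℝ} (hA : A.IsHermitian) (i : n) :
    (scalar n (hA.eigenvalues i) - A).det = 0 := by
  rw [← eval_charpoly]
  exact mem_spectrum_iff_isRoot_charpoly.mp (hA.eigenvalues_mem_spectrum_real i)

theorem gramMatrixR_isSymm : gramMatrixR.IsSymm := by
  ext i j
  fin_cases i <;> fin_cases j <;> rfl

theorem trace_gramMatrixR : gramMatrixR.trace = -10 := by
  simp [gramMatrixR, trace, Fin.sum_univ_succ]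
  norm_num

theorem det_scalar_sub_gramMatrixR (x : ℝ) :
    (scalar (Fin 5) x - gramMatrixR).det = (x + 2) ^ 2 * (x ^ 3 + 6 * x ^ 2 - 12 * x - 76) := by
  simp [gramMatrixR, det_succ_row_zero, Fin.sum_univ_succ, Fin.succAbove]
  ring

theorem det_gramMatrixR : gramMatrixR.det = 304 := by
  have h := det_scalar_sub_gramMatrixR 0
  simp only [map_zero, zero_sub, det_neg, Fintype.card_fin] at h
  linarith

-- The cubic factor has roots near `-5.82`, `-3.71` and `3.52`.
theorem bounds_of_charpoly_gramMatrixR_root {x : ℝ}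
    (hx : (x + 2) ^ 2 * (x ^ 3 + 6 * x ^ 2 - 12 * x - 76) = 0) :
    -59 / 10 < x ∧ (0 < x → 7 / 2 < x) := by
  rcases mul_eq_zero.mp hx with h | h
  · have : x = -2 := by nlinarith
    constructor <;> intros <;> linarith
  · constructor
    · nlinarith [sq_nonneg (x + 59 / 10), sq_nonneg x]
    · intro hpos
      nlinarith [sq_nonneg (x - 2), sq_nonneg (x - 7 / 2), mul_pos hpos hpos]

section Eigenvalues

variable (hG : gramMatrixR.IsHermitian)
include hG

theorem bounds_eigenvalues_gramMatrixR (i : Fin 5) :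
    -59 / 10 < hG.eigenvalues i ∧ (0 < hG.eigenvalues i → 7 / 2 < hG.eigenvalues i) :=
  bounds_of_charpoly_gramMatrixR_root <|
    (det_scalar_sub_gramMatrixR _).symm.trans (hG.det_scalar_eigenvalues_sub_eq_zero i)

theorem sum_eigenvalues_gramMatrixR : ∑ i, hG.eigenvalues i = -10 := by
  simpa [trace_gramMatrixR] using hG.trace_eq_sum_eigenvalues.symm

theorem prod_eigenvalues_gramMatrixR : ∏ i, hG.eigenvalues i = 304 := by
  simpa [det_gramMatrixR] using hG.det_eq_prod_eigenvalues.symm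

end Eigenvalues

/-- The Gram matrix is symmetric and has signature `(1,4)`: exactly one positive
eigenvalue and four negative eigenvalues, counted with multiplicity. -/
theorem stmt_2 :
    gramMatrixR.IsSymm ∧
    ∀ hG : gramMatrixR.IsHermitian,
      (Finset.univ.filter fun i => 0 < hG.eigenvalues i).card = 1 ∧
      (Finset.univ.filter fun i => hG.eigenvalues i < 0).card = 4 := by
  refine ⟨gramMatrixR_isSymm, fun hG => ?_⟩
  have h_prod : 0 < ∏ i, hG.eigenvalues i := by rw [prod_eigenvalues_gramMatrixR]; norm_num
  have h_ne i : hG.eigenvalues i ≠ 0 := fun h => h_prod.ne' (prod_eq_zero (mem_univ i) h)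
  have h_card := card_filter_pos_add_card_filter_neg h_ne
  have h_pos_le : #{i | 0 < hG.eigenvalues i} ≤ 2 := by
    have h_le := mul_card_filter_pos_add_mul_card_filter_neg_le_sum h_ne
      (fun i => (bounds_eigenvalues_gramMatrixR hG i).1.le)
      (fun i hi => ((bounds_eigenvalues_gramMatrixR hG i).2 hi).le)
    rw [sum_eigenvalues_gramMatrixR] at h_le
    have h_card' : (#{i | 0 < hG.eigenvalues i} : ℝ) + #{i | hG.eigenvalues i < 0} = 5 := by
      exact_mod_cast h_card
    by_contra! h3
    have h3' : (3 : ℝ) ≤ #{i | 0 < hG.eigenvalues i} := by exact_mod_cast h3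
    linarith
  obtain ⟨k, hk⟩ := even_card_filter_neg_of_prod_pos h_prod
  simp only [Fintype.card_fin] at h_card
  omega
end

section
/- There exist no integers x, y, z₁, z₂, z₃ such that −2x² − 2y² − 2(z₁²+z₂²+z₃²) + 6xy + (4x+2y)(z₁+z₂+z₃) = 0 and 7x + 4y + z₁ + z₂ + z₃ = 2. -/
/-!
Write `s = z₁ + z₂ + z₃`. Since `s² ≤ 3 (z₁² + z₂² + z₃²)`, the first equation forces
`2 s² ≤ 3 (-2x² - 2y² + 6xy + (4x + 2y) s)`, and substituting `s = 2 - 7x - 4y` from the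
second equation this becomes `g(x, y) ≤ 0` for the positive definite inhomogeneous form
`g = 94x² + 92xy + 31y² - 40x - 22y + 4`. Its minimum `-3/7` is attained at `(1/7, 1/7)`,
but completing the square, `124 g = (92x + 62y - 22)² + 12 (38 x (7x - 2) + 1)`, shows that
`g > 0` at every integer point, because `x (7x - 2) ≥ 0` for integers `x`.
-/

theorem sq_add_add_le_three_mul {R : Type*} [CommRing R] [LinearOrder R] [IsStrictOrderedRing R]
    (a b c : R) : (a + b + c) ^ 2 ≤ 3 * (a ^ 2 + b ^ 2 + c ^ 2) := by
  nlinarith [sq_nonneg (a - b), sq_nonneg (b - c), sq_nonneg (a - c)]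

theorem Int.mul_seven_mul_sub_two_nonneg (x : ℤ) : 0 ≤ x * (7 * x - 2) := by
  rcases le_or_gt x 0 with hx | hx
  · exact mul_nonneg_of_nonpos_of_nonpos hx (by omega)
  · exact mul_nonneg hx.le (by omega)

theorem quadratic_form_pos (x y : ℤ) :
    0 < 94 * x ^ 2 + 92 * x * y + 31 * y ^ 2 - 40 * x - 22 * y + 4 := by
  have hcompleted : 124 * (94 * x ^ 2 + 92 * x * y + 31 * y ^ 2 - 40 * x - 22 * y + 4)
      = (92 * x + 62 * y - 22) ^ 2 + 12 * (38 * (x * (7 * x - 2)) + 1) := by ring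
  linarith [sq_nonneg (92 * x + 62 * y - 22), x.mul_seven_mul_sub_two_nonneg]

/-- Lemma 4.4: no class `E` in the lattice `𝕃` with `E² = 0` and `E·C = 2`. -/
theorem stmt_5 :
    ¬ ∃ x y z₁ z₂ z₃ : ℤ,
      -2 * x ^ 2 - 2 * y ^ 2 - 2 * (z₁ ^ 2 + z₂ ^ 2 + z₃ ^ 2) + 6 * x * y
        + (4 * x + 2 * y) * (z₁ + z₂ + z₃) = 0 ∧
      7 * x + 4 * y + z₁ + z₂ + z₃ = 2 := by
  rintro ⟨x, y, z₁, z₂, z₃, hself, hdeg⟩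
  have hs : z₁ + z₂ + z₃ = 2 - 7 * x - 4 * y := by linarith
  have hcs := sq_add_add_le_three_mul z₁ z₂ z₃
  rw [hs] at hself hcs
  have hg : 94 * x ^ 2 + 92 * x * y + 31 * y ^ 2 - 40 * x - 22 * y + 4 ≤ 0 := by linarith
  exact (quadratic_form_pos x y).not_ge hg
end

section
/- There exist no integers x, y, z₁, z₂, z₃ such that −2x² − 2y² − 2(z₁²+z₂²+z₃²) + 6xy + (4x+2y)(z₁+z₂+z₃) = −2 and 7x + 4y + z₁ + z₂ + z₃ = 0. -/
/-! Eliminating `z₁ + z₂ + z₃ = -7x - 4y` turns `v·v = -2` into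
`15x² + 12xy + 5y² + z₁² + z₂² + z₃² = 1`. The binary form is positive definite with minimum `5`
on nonzero vectors, since `5(15x² + 12xy + 5y²) = (6x + 5y)² + 39x²`, so `x = y = 0`. Then
`z₁² + z₂² + z₃² = 1` and `z₁ + z₂ + z₃ = 0`, which have different parities. -/

lemma eq_zero_of_binary_form_le_one {x y : ℤ} (h : 15 * x ^ 2 + 12 * x * y + 5 * y ^ 2 ≤ 1) :
    x = 0 ∧ y = 0 := by
  have hdiag : 5 * (15 * x ^ 2 + 12 * x * y + 5 * y ^ 2) = (6 * x + 5 * y) ^ 2 + 39 * x ^ 2 := by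
    ring
  have hx : x = 0 := by nlinarith [sq_nonneg (6 * x + 5 * y), sq_nonneg x]
  subst hx
  exact ⟨rfl, by nlinarith [sq_nonneg y]⟩

lemma even_sq_sub_self (z : ℤ) : Even (z ^ 2 - z) := by
  simpa [sq, ← mul_sub_one] using Int.even_mul_pred_self z

/-- Lemma 4.4: no class `F` in the lattice `𝕃` with `F² = -2` and `F·C = 0`. -/
theorem stmt_6 :
    ¬ ∃ x y z₁ z₂ z₃ : ℤ,
      -2 * x ^ 2 - 2 * y ^ 2 - 2 * (z₁ ^ 2 + z₂ ^ 2 + z₃ ^ 2) + 6 * x * y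
        + (4 * x + 2 * y) * (z₁ + z₂ + z₃) = -2 ∧
      7 * x + 4 * y + z₁ + z₂ + z₃ = 0 := by
  rintro ⟨x, y, z₁, z₂, z₃, hsq, horth⟩
  have hreduced : 15 * x ^ 2 + 12 * x * y + 5 * y ^ 2 + (z₁ ^ 2 + z₂ ^ 2 + z₃ ^ 2) = 1 := by
    have h : 2 * (15 * x ^ 2 + 12 * x * y + 5 * y ^ 2 + (z₁ ^ 2 + z₂ ^ 2 + z₃ ^ 2)) = 2 := by
      linear_combination -hsq + (4 * x + 2 * y) * horth
    linarith
  obtain ⟨rfl, rfl⟩ : x = 0 ∧ y = 0 :=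
    eq_zero_of_binary_form_le_one (by nlinarith [sq_nonneg z₁, sq_nonneg z₂, sq_nonneg z₃])
  have hone : z₁ ^ 2 - z₁ + (z₂ ^ 2 - z₂ + (z₃ ^ 2 - z₃)) = 1 := by
    linear_combination hreduced - horth
  have heven := (even_sq_sub_self z₁).add ((even_sq_sub_self z₂).add (even_sq_sub_self z₃))
  exact Int.not_even_one (hone ▸ heven)
end

section
/- There exist no integers x, y, z₁, z₂, z₃ such that −2x² − 2y² − 2(z₁²+z₂²+z₃²) + 6xy + (4x+2y)(z₁+z₂+z₃) = 2 and 7x + 4y + z₁ + z₂ + z₃ = 7. -/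
/-!
Substituting `z₁ + z₂ + z₃ = 7 - 7x - 4y` and using
`3 (z₁² + z₂² + z₃²) = (z₁ + z₂ + z₃)² + Σ (zᵢ - zⱼ)²`, the two equations force
`reducedForm x y + Σ (zᵢ - zⱼ)² = 0`. Completing the square,
`94 · reducedForm x y = (94x + 46y - 70)² + 798 y (y - 1) - 12`, and since `y (y - 1) ≥ 0` on `ℤ`
with equality only for `y ∈ {0, 1}`, where `|94x + 46y - 70| ≥ 24`, the form is positive on `ℤ²`.
-/

def reducedForm (x y : ℤ) : ℤ :=
  94 * x ^ 2 + 92 * x * y + 31 * y ^ 2 - 140 * x - 77 * y + 52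

lemma reducedForm_pos (x y : ℤ) : 0 < reducedForm x y := by
  have hcompl : 94 * reducedForm x y = (94 * x + 46 * y - 70) ^ 2 + 798 * (y * (y - 1)) - 12 := by
    unfold reducedForm; ring
  have hy : 0 ≤ y * (y - 1) := by nlinarith [Int.le_self_sq y]
  rcases hy.eq_or_lt with hy0 | hy1
  · have hy01 : y = 0 ∨ y = 1 := by
      rcases mul_eq_zero.mp hy0.symm with h | h <;> omega
    have ht : 4 ≤ 94 * x + 46 * y - 70 ∨ 94 * x + 46 * y - 70 ≤ -4 := by omega
    rcases ht with ht | ht <;> nlinarith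
  · nlinarith

lemma reducedForm_add_sq_sub_eq_zero {x y z₁ z₂ z₃ : ℤ}
    (hsq : -2 * x ^ 2 - 2 * y ^ 2 - 2 * (z₁ ^ 2 + z₂ ^ 2 + z₃ ^ 2) + 6 * x * y
        + (4 * x + 2 * y) * (z₁ + z₂ + z₃) = 2)
    (hdeg : 7 * x + 4 * y + z₁ + z₂ + z₃ = 7) :
    reducedForm x y + ((z₁ - z₂) ^ 2 + (z₁ - z₃) ^ 2 + (z₂ - z₃) ^ 2) = 0 := by
  have h2 : 2 * (reducedForm x y + ((z₁ - z₂) ^ 2 + (z₁ - z₃) ^ 2 + (z₂ - z₃) ^ 2)) = 0 := by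
    unfold reducedForm
    linear_combination (-3) * hsq + (26 * x + 14 * y - 2 * (z₁ + z₂ + z₃) - 14) * hdeg
  omega

/-- Proposition 4.5: no class `D` in the lattice `𝕃` with `D² = 2` and `D·C = 7`. -/
theorem stmt_7 :
    ¬ ∃ x y z₁ z₂ z₃ : ℤ,
      -2 * x ^ 2 - 2 * y ^ 2 - 2 * (z₁ ^ 2 + z₂ ^ 2 + z₃ ^ 2) + 6 * x * y
        + (4 * x + 2 * y) * (z₁ + z₂ + z₃) = 2 ∧
      7 * x + 4 * y + z₁ + z₂ + z₃ = 7 := by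
  rintro ⟨x, y, z₁, z₂, z₃, hsq, hdeg⟩
  have hzero := reducedForm_add_sq_sub_eq_zero hsq hdeg
  have hpos := reducedForm_pos x y
  linarith [sq_nonneg (z₁ - z₂), sq_nonneg (z₁ - z₃), sq_nonneg (z₂ - z₃)]
end

section
/- There exist no integers x, y, z₁, z₂, z₃ such that −2x² − 2y² − 2(z₁²+z₂²+z₃²) + 6xy + (4x+2y)(z₁+z₂+z₃) = 2 and 7x + 4y + z₁ + z₂ + z₃ = 6. -/
/-!
Write `D = xΓ + yQ + z₁L₁ + z₂L₂ + z₃L₃`, so that `C² = 14`. The Hodge defect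
`(D·C)² − C²·D²` is a quadratic form in `D` that vanishes on `C` and only depends on `D` modulo
`ℤC`; in the coordinates of `D − z₃C` it is the positive definite form `discForm` below, whose
nonzero values are all at least `14`. A class with `D² = 2` and `D·C = 6` would have defect
`36 − 28 = 8`.
-/

def discForm (a b c d : ℤ) : ℤ :=
  77 * a ^ 2 + 44 * b ^ 2 + 29 * c ^ 2 + 29 * d ^ 2 - 28 * a * b - 42 * a * c - 42 * a * d
    - 20 * b * c - 20 * b * d + 2 * c * d

theorem discForm_comm (a b c d : ℤ) : discForm a b c d = discForm a b d c := by
  unfold discForm; ring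

/- The three bounds below are the last pivots of `LDLᵀ` decompositions of `discForm`; the hints
are the (cleared) rows of `Lᵀ`. -/
theorem mul_sq_fst_le_discForm (a b c d : ℤ) : 133 * a ^ 2 ≤ 5 * discForm a b c d := by
  unfold discForm
  nlinarith [sq_nonneg (22 * b - 5 * c - 5 * d - 7 * a), sq_nonneg (21 * c - d - 19 * a),
    sq_nonneg (20 * d - 19 * a)]

theorem mul_sq_snd_le_discForm (a b c d : ℤ) : 1064 * b ^ 2 ≤ 51 * discForm a b c d := by
  unfold discForm
  nlinarith [sq_nonneg (11 * a - 3 * c - 3 * d - 2 * b), sq_nonneg (64 * c - 13 * d - 38 * b),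
    sq_nonneg (51 * d - 38 * b)]

theorem mul_sq_thd_le_discForm (a b c d : ℤ) : 14 * c ^ 2 ≤ discForm a b c d := by
  unfold discForm
  nlinarith [sq_nonneg (11 * a - 2 * b - 3 * d - 3 * c), sq_nonneg (3 * b - d - c),
    sq_nonneg (2 * d - c)]

theorem eq_zero_of_discForm_lt_fourteen {a b c d : ℤ} (h : discForm a b c d < 14) :
    a = 0 ∧ b = 0 ∧ c = 0 ∧ d = 0 := by
  have ha := mul_sq_fst_le_discForm a b c d
  have hb := mul_sq_snd_le_discForm a b c d
  have hc := mul_sq_thd_le_discForm a b c d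
  have hd := mul_sq_thd_le_discForm a b d c
  rw [← discForm_comm] at hd
  refine ⟨?_, ?_, ?_, ?_⟩ <;> nlinarith

theorem sq_sub_fourteen_mul_eq_discForm (x y z₁ z₂ z₃ : ℤ) :
    (7 * x + 4 * y + z₁ + z₂ + z₃) ^ 2
      - 14 * (-2 * x ^ 2 - 2 * y ^ 2 - 2 * (z₁ ^ 2 + z₂ ^ 2 + z₃ ^ 2) + 6 * x * y
        + (4 * x + 2 * y) * (z₁ + z₂ + z₃))
      = discForm (x - z₃) (y - z₃) (z₁ - z₃) (z₂ - z₃) := by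
  unfold discForm; ring

/-- Proposition 4.5: no class `D` in the lattice `𝕃` with `D² = 2` and `D·C = 6`. -/
theorem stmt_8 :
    ¬ ∃ x y z₁ z₂ z₃ : ℤ,
      -2 * x ^ 2 - 2 * y ^ 2 - 2 * (z₁ ^ 2 + z₂ ^ 2 + z₃ ^ 2) + 6 * x * y
        + (4 * x + 2 * y) * (z₁ + z₂ + z₃) = 2 ∧
      7 * x + 4 * y + z₁ + z₂ + z₃ = 6 := by
  rintro ⟨x, y, z₁, z₂, z₃, hsq, hdeg⟩
  have h8 : discForm (x - z₃) (y - z₃) (z₁ - z₃) (z₂ - z₃) = 8 := by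
    rw [← sq_sub_fourteen_mul_eq_discForm, hsq, hdeg]; norm_num
  obtain ⟨ha, hb, hc, hd⟩ := eq_zero_of_discForm_lt_fourteen (h8.trans_lt (by norm_num))
  rw [ha, hb, hc, hd] at h8
  norm_num [discForm] at h8
end
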